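/- arXiv:1106.1978 — 5 statements merged into one kernel-verified Lean document; each statement's English description precedes it below -/
import Mathlib

section
/- If R ⊆ S × S is a transitive relation on a finite set S, then its lifting R̂ on distributions is transitive: Δ₁ R̂ Δ₂ and Δ₂ R̂ Δ₃ imply Δ₁ R̂ Δ₃. -/
namespace PAGame

open Finset

/-- A discrete probability distribution on a finite set `S`:
a function into `[0,1]` summing to `1`. -/
def ProbDist {S : Type*} [Fintype S] (Δ : S → ℝ) : Prop :=
  (∀ s, 0 ≤ Δ s ∧ Δ s ≤ 1) ∧ ∑ s, Δ s = 1

/-- The Dirac (point) distribution on `s`. -/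
noncomputable def diracD {S : Type*} (s : S) : S → ℝ :=
  fun t => by classical exact if t = s then 1 else 0

/-- Lifting of a relation `R ⊆ S × T` to distributions, via weight functions. -/
def LiftRel {S T : Type*} [Fintype S] [Fintype T] (R : S → T → Prop)
    (Δ : S → ℝ) (Θ : T → ℝ) : Prop :=
  ∃ w : S → T → ℝ, (∀ s t, 0 ≤ w s t ∧ w s t ≤ 1) ∧
    (∀ s, ∑ t, w s t = Δ s) ∧ (∀ t, ∑ s, w s t = Θ t) ∧
    ∀ s t, 0 < w s t → R s t

/-- A partition of `S` into (nonempty) blocks. -/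
def IsPartition {S : Type*} (C : Finset (Finset S)) : Prop :=
  (∀ s : S, ∃! B, B ∈ C ∧ s ∈ B) ∧ ∀ B ∈ C, B.Nonempty

/-- `r` is a partial order on the blocks of the partition `C`. -/
def IsPartialOrderOn {S : Type*} (C : Finset (Finset S))
    (r : Finset S → Finset S → Prop) : Prop :=
  (∀ P Q, r P Q → P ∈ C ∧ Q ∈ C) ∧ (∀ P ∈ C, r P P) ∧
  (∀ P Q, r P Q → r Q P → P = Q) ∧ ∀ P Q R', r P Q → r Q R' → r P R'

/-- A distribution on `S` mapped onto blocks: `Δ_Σ(B) = Δ(B)`. -/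
def distOn {S : Type*} (Δ : S → ℝ) : Finset S → ℝ := fun B => ∑ x ∈ B, Δ x

/-- Lifting of a relation on blocks of the partition `C` to distributions over blocks. -/
def LiftRelP {S : Type*} (C : Finset (Finset S)) (r : Finset S → Finset S → Prop)
    (D E : Finset S → ℝ) : Prop :=
  ∃ w : Finset S → Finset S → ℝ, (∀ P Q, 0 ≤ w P Q) ∧
    (∀ P ∈ C, ∑ Q ∈ C, w P Q = D P) ∧ (∀ Q ∈ C, ∑ P ∈ C, w P Q = E Q) ∧
    ∀ P Q, 0 < w P Q → r P Q

/-- Smyth order on sets, induced by a relation `lift`. -/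
def Smyth {α : Type*} (lift : α → α → Prop) (A B : Set α) : Prop :=
  ∀ Θ ∈ B, ∃ Δ ∈ A, lift Δ Θ

/-- The transition function lifted to mixed actions:
`δ̂(s,⟨π₁,π₂⟩)(t) = ∑ π₁(a₁)·π₂(a₂)·δ(s,⟨a₁,a₂⟩)(t)`. -/
def stepD {S A₁ A₂ : Type*} [Fintype A₁] [Fintype A₂]
    (δ : S → A₁ → A₂ → S → ℝ) (s : S) (π₁ : A₁ → ℝ) (π₂ : A₂ → ℝ) : S → ℝ :=
  fun t => ∑ a₁, ∑ a₂, π₁ a₁ * π₂ a₂ * δ s a₁ a₂ t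

/-- `step(s,π)_Σ`: the set of next-state distributions (mapped onto blocks)
possible when player I plays the mixed action `π₁` in `s`. -/
def stepSet {S A₁ A₂ : Type*} [Fintype S] [Fintype A₁] [Fintype A₂]
    (δ : S → A₁ → A₂ → S → ℝ) (s : S) (π₁ : A₁ → ℝ) : Set (Finset S → ℝ) :=
  { D | ∃ π₂ : A₂ → ℝ, ProbDist π₂ ∧ D = distOn (stepD δ s π₁ π₂) }

/-- `t` simulates `s` with respect to player I's choice on the partition pair `(C,r)`. -/
def SimChoice {S A₁ A₂ : Type*} [Fintype S] [Fintype A₁] [Fintype A₂]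
    (C : Finset (Finset S)) (r : Finset S → Finset S → Prop)
    (δ : S → A₁ → A₂ → S → ℝ) (s t : S) : Prop :=
  ∀ π : A₁ → ℝ, ProbDist π → ∃ π' : A₁ → ℝ, ProbDist π' ∧
    Smyth (LiftRelP C r) (stepSet δ s π) (stepSet δ t π')

/-- The partition pair `(C,r)` is stable with respect to player I's choice. -/
def StableChoice {S A₁ A₂ : Type*} [Fintype S] [Fintype A₁] [Fintype A₂]
    (C : Finset (Finset S)) (r : Finset S → Finset S → Prop)
    (δ : S → A₁ → A₂ → S → ℝ) : Prop :=
  ∀ π : A₁ → ℝ, ProbDist π → ∀ P Q, r P Q → ∀ s ∈ P,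
    ∃ π' : A₁ → ℝ, ProbDist π' ∧
      ∀ t ∈ Q, Smyth (LiftRelP C r) (stepSet δ s π) (stepSet δ t π')

/-- Probabilistic alternating I-simulation. -/
def IsPASim {S AP A₁ A₂ : Type*} [Fintype S] [Fintype A₁] [Fintype A₂]
    (L : S → AP) (δ : S → A₁ → A₂ → S → ℝ) (R : S → S → Prop) : Prop :=
  ∀ s t, R s t → L s = L t ∧
    ∀ π₁ : A₁ → ℝ, ProbDist π₁ → ∃ π₁' : A₁ → ℝ, ProbDist π₁' ∧
      ∀ π₂' : A₂ → ℝ, ProbDist π₂' → ∃ π₂ : A₂ → ℝ, ProbDist π₂ ∧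
        LiftRel R (stepD δ s π₁ π₂) (stepD δ t π₁' π₂')

/-- The order on partition pairs: `(C₁,r₁) ≤ (C₂,r₂)` iff `C₁` is finer than `C₂`
and `r₁` is contained in the relation on `C₁` induced by `r₂`. -/
def PPLe {S : Type*} (C₁ : Finset (Finset S)) (r₁ : Finset S → Finset S → Prop)
    (C₂ : Finset (Finset S)) (r₂ : Finset S → Finset S → Prop) : Prop :=
  (∀ P ∈ C₁, ∃ Q ∈ C₂, P ⊆ Q) ∧
  ∀ P Q, r₁ P Q → ∃ P' Q', P' ∈ C₂ ∧ Q' ∈ C₂ ∧ P ⊆ P' ∧ Q ⊆ Q' ∧ r₂ P' Q'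

/-- `(C₁,r₁)` is stable on `(C₂,r₂)`. -/
def StableOn {S A₁ A₂ : Type*} [Fintype S] [Fintype A₁] [Fintype A₂]
    (C₁ : Finset (Finset S)) (r₁ : Finset S → Finset S → Prop)
    (C₂ : Finset (Finset S)) (r₂ : Finset S → Finset S → Prop)
    (δ : S → A₁ → A₂ → S → ℝ) : Prop :=
  ∀ P Q, r₁ P Q → ∀ s ∈ P, ∀ t ∈ Q, SimChoice C₂ r₂ δ s t

/-- `Δ(↑B)` : the mass of the up-closure of block `B` w.r.t. the order `r`. -/
noncomputable def upMass {S : Type*} (C : Finset (Finset S))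
    (r : Finset S → Finset S → Prop) (Δ : S → ℝ) (B : Finset S) : ℝ := by
  classical exact ∑ B' ∈ C, if r B B' then distOn Δ B' else 0

/-- `Δ(↑s)` for a partial order on `S`. -/
noncomputable def upClMass {S : Type*} [Fintype S] [PartialOrder S]
    (Δ : S → ℝ) (s : S) : ℝ := by
  classical exact ∑ t ∈ Finset.univ.filter (fun t => s ≤ t), Δ t

/-- The labelling partition `Σ₀`: states grouped by equal labels. -/
def labelPartition {S AP : Type*} [Fintype S] [DecidableEq S] [DecidableEq AP]
    (L : S → AP) : Finset (Finset S) :=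
  Finset.univ.image (fun s => Finset.univ.filter (fun t => L t = L s))

/-- `(C,r) ≤ (Σ₀, Id)`: blocks have constant labels and related blocks agree on labels. -/
def BelowLabel {S AP : Type*} (L : S → AP) (C : Finset (Finset S))
    (r : Finset S → Finset S → Prop) : Prop :=
  (∀ P ∈ C, ∀ s ∈ P, ∀ t ∈ P, L s = L t) ∧
  ∀ P Q, r P Q → ∀ s ∈ P, ∀ t ∈ Q, L s = L t

/-- `(C',r')` is the largest partition pair below `(C,r)` that is stable on `(C,r)`
(the refinement operator ρ). -/
def IsRho {S A₁ A₂ : Type*} [Fintype S] [Fintype A₁] [Fintype A₂]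
    (δ : S → A₁ → A₂ → S → ℝ)
    (C : Finset (Finset S)) (r : Finset S → Finset S → Prop)
    (C' : Finset (Finset S)) (r' : Finset S → Finset S → Prop) : Prop :=
  (IsPartition C' ∧ IsPartialOrderOn C' r' ∧ PPLe C' r' C r ∧ StableOn C' r' C r δ) ∧
  ∀ C'' r'', IsPartition C'' → IsPartialOrderOn C'' r'' → PPLe C'' r'' C r →
    StableOn C'' r'' C r δ → PPLe C'' r'' C' r'

end PAGame

namespace PAGame

/-- the lifting of a transitive relation is transitive. -/
theorem stmt3 {S : Type*} [Fintype S] (R : S → S → Prop)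
    (htrans : ∀ s t u, R s t → R t u → R s u)
    (Δ₁ Δ₂ Δ₃ : S → ℝ)
    (h₁ : ProbDist Δ₁) (h₂ : ProbDist Δ₂) (h₃ : ProbDist Δ₃)
    (h12 : LiftRel R Δ₁ Δ₂) (h23 : LiftRel R Δ₂ Δ₃) :
    LiftRel R Δ₁ Δ₃ := by
  classical
  obtain ⟨w1, hw1b, hw1r, hw1c, hw1R⟩ := h12
  obtain ⟨w2, hw2b, hw2r, hw2c, hw2R⟩ := h23
  -- w1 s t ≤ Δ₂ t, and Δ₂ t = 0 → w1 s t = 0 ; similarly w2 t u ≤ Δ₂ t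
  have hw1le : ∀ s t, w1 s t ≤ Δ₂ t := by
    intro s t
    rw [← hw1c t]
    exact Finset.single_le_sum (fun s' _ => (hw1b s' t).1) (Finset.mem_univ s)
  have hw2le : ∀ t u, w2 t u ≤ Δ₂ t := by
    intro t u
    rw [← hw2r t]
    exact Finset.single_le_sum (fun u' _ => (hw2b t u').1) (Finset.mem_univ u)
  set v : S → S → ℝ := fun s u => ∑ t, if Δ₂ t = 0 then 0 else w1 s t * w2 t u / Δ₂ t
    with hv
  have hterm_nn : ∀ s u t, (0:ℝ) ≤ if Δ₂ t = 0 then 0 else w1 s t * w2 t u / Δ₂ t := by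
    intro s u t
    split
    · exact le_refl 0
    · rename_i h
      have h2 : 0 < Δ₂ t := lt_of_le_of_ne (le_trans (hw1b s t).1 (hw1le s t)) (Ne.symm h)
      exact div_nonneg (mul_nonneg (hw1b s t).1 (hw2b t u).1) h2.le
  have hvnn : ∀ s u, 0 ≤ v s u := fun s u =>
    Finset.sum_nonneg fun t _ => hterm_nn s u t
  have hrow : ∀ s, ∑ u, v s u = Δ₁ s := by
    intro s
    rw [Finset.sum_comm]
    calc (∑ t, ∑ u, if Δ₂ t = 0 then 0 else w1 s t * w2 t u / Δ₂ t)
        = ∑ t, w1 s t := by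
          refine Finset.sum_congr rfl fun t _ => ?_
          by_cases h : Δ₂ t = 0
          · simp only [h, if_true, Finset.sum_const_zero]
            have := hw1le s t
            rw [h] at this
            linarith [(hw1b s t).1]
          · simp only [h, if_false]
            rw [← Finset.sum_div, ← Finset.mul_sum, hw2r t, mul_div_assoc,
              div_self h, mul_one]
      _ = Δ₁ s := hw1r s
  have hcol : ∀ u, ∑ s, v s u = Δ₃ u := by
    intro u
    rw [Finset.sum_comm]
    calc (∑ t, ∑ s, if Δ₂ t = 0 then 0 else w1 s t * w2 t u / Δ₂ t)
        = ∑ t, w2 t u := by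
          refine Finset.sum_congr rfl fun t _ => ?_
          by_cases h : Δ₂ t = 0
          · simp only [h, if_true, Finset.sum_const_zero]
            have := hw2le t u
            rw [h] at this
            linarith [(hw2b t u).1]
          · simp only [h, if_false]
            have : ∀ s, w1 s t * w2 t u / Δ₂ t = w1 s t * (w2 t u / Δ₂ t) := by
              intro s; ring
            simp_rw [this]
            rw [← Finset.sum_mul, hw1c t, mul_comm]
            exact div_mul_cancel₀ _ h
      _ = Δ₃ u := hw2c u
  refine ⟨v, fun s u => ⟨hvnn s u, ?_⟩, hrow, hcol, ?_⟩
  · have : v s u ≤ ∑ u', v s u' :=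
      Finset.single_le_sum (fun u' _ => hvnn s u') (Finset.mem_univ u)
    rw [hrow s] at this
    exact le_trans this (h₁.1 s).2
  · intro s u hpos
    obtain ⟨t, _, ht⟩ : ∃ t ∈ Finset.univ,
        (0:ℝ) < if Δ₂ t = 0 then 0 else w1 s t * w2 t u / Δ₂ t := by
      by_contra h
      push_neg at h
      have : v s u ≤ 0 := Finset.sum_nonpos fun t htm => h t htm
      linarith
    by_cases h : Δ₂ t = 0
    · rw [if_pos h] at ht; linarith
    · rw [if_neg h] at ht
      have h2 : 0 < Δ₂ t := lt_of_le_of_ne (le_trans (hw1b s t).1 (hw1le s t)) (Ne.symm h)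
      have hmul : 0 < w1 s t * w2 t u := by
        have := (div_pos_iff).mp ht
        rcases this with ⟨a, _⟩ | ⟨_, b⟩
        · exact a
        · linarith
      have ha : 0 < w1 s t := by
        rcases mul_pos_iff.mp hmul with ⟨a, _⟩ | ⟨a, _⟩
        · exact a
        · linarith [(hw1b s t).1]
      have hb : 0 < w2 t u := by
        rcases mul_pos_iff.mp hmul with ⟨_, b⟩ | ⟨_, b⟩
        · exact b
        · linarith [(hw2b t u).1]
      exact htrans s t u (hw1R s t ha) (hw2R t u hb)

end PAGame
end

section
/- Monotonicity of lifting under coarsening (Lemma 3 of the paper): Let (Σ₁, ⪯₁) and (Σ₂, ⪯₂) be partition pairs on a finite set S with (Σ₁, ⪯₁) ≤ (Σ₂, ⪯₂) (i.e., Σ₁ is finer than Σ₂ and ⪯₁ is contained in the relation on Σ₁ induced by ⪯₂). If distributions Δ, Δ' satisfy Δ_{Σ₁} ⪯̂₁ Δ'_{Σ₁}, then Δ_{Σ₂} ⪯̂₂ Δ'_{Σ₂}. -/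
namespace PAGame

/-- Lemma 3: monotonicity of lifting under coarsening of
partition pairs. -/
theorem stmt6 {S : Type*} [Fintype S]
    (C₁ C₂ : Finset (Finset S)) (r₁ r₂ : Finset S → Finset S → Prop)
    (hp₁ : IsPartition C₁) (hp₂ : IsPartition C₂)
    (ho₁ : IsPartialOrderOn C₁ r₁) (ho₂ : IsPartialOrderOn C₂ r₂)
    (hle : PPLe C₁ r₁ C₂ r₂)
    (Δ Δ' : S → ℝ) (hΔ : ProbDist Δ) (hΔ' : ProbDist Δ')
    (h : LiftRelP C₁ r₁ (distOn Δ) (distOn Δ')) :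
    LiftRelP C₂ r₂ (distOn Δ) (distOn Δ') := by
  classical
  obtain ⟨w, hw0, hrow, hcol, hpos⟩ := h
  -- uniqueness of C₂ block containing an element
  have huniq : ∀ x : S, ∀ P Q, P ∈ C₂ → Q ∈ C₂ → x ∈ P → x ∈ Q → P = Q := by
    intro x P Q hP hQ hxP hxQ
    obtain ⟨B, _, hB⟩ := hp₂.1 x
    rw [hB P ⟨hP, hxP⟩, hB Q ⟨hQ, hxQ⟩]
  -- the map from C₁ blocks to their containing C₂ block
  have hex : ∀ P ∈ C₁, ∃ Q, Q ∈ C₂ ∧ P ⊆ Q := by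
    intro P hP; obtain ⟨Q, hQ, hPQ⟩ := hle.1 P hP; exact ⟨Q, hQ, hPQ⟩
  let f : Finset S → Finset S := fun P =>
    if h : ∃ Q, Q ∈ C₂ ∧ P ⊆ Q then h.choose else ∅
  have hf : ∀ P ∈ C₁, f P ∈ C₂ ∧ P ⊆ f P := by
    intro P hP
    have h := hex P hP
    simp only [f, dif_pos h]
    exact h.choose_spec
  have hfval : ∀ P ∈ C₁, ∀ Q ∈ C₂, P ⊆ Q → f P = Q := by
    intro P hP Q hQ hPQ
    obtain ⟨x, hx⟩ := hp₁.2 P hP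
    exact huniq x _ _ (hf P hP).1 hQ ((hf P hP).2 hx) (hPQ hx)
  -- a C₂ block is the disjoint union of the C₁ blocks mapping to it
  have hmem : ∀ P' ∈ C₂, ∀ x : S, x ∈ P' ↔
      ∃ P, P ∈ C₁ ∧ f P = P' ∧ x ∈ P := by
    intro P' hP' x
    constructor
    · intro hx
      obtain ⟨P, ⟨hP, hxP⟩, _⟩ := hp₁.1 x
      refine ⟨P, hP, ?_, hxP⟩
      exact huniq x _ _ (hf P hP).1 hP' ((hf P hP).2 hxP) hx
    · rintro ⟨P, hP, hfP, hxP⟩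
      exact hfP ▸ (hf P hP).2 hxP
  have hdisj : ∀ P ∈ C₁, ∀ Q ∈ C₁, P ≠ Q → Disjoint P Q := by
    intro P hP Q hQ hne
    rw [Finset.disjoint_left]
    intro x hxP hxQ
    obtain ⟨B, _, hB⟩ := hp₁.1 x
    exact hne (by rw [hB P ⟨hP, hxP⟩, hB Q ⟨hQ, hxQ⟩])
  have hsplit : ∀ (g : S → ℝ), ∀ P' ∈ C₂,
      ∑ P ∈ C₁.filter (fun P => f P = P'), distOn g P = distOn g P' := by
    intro g P' hP'
    have hbi : (C₁.filter (fun P => f P = P')).biUnion id = P' := by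
      ext x
      simp only [Finset.mem_biUnion, Finset.mem_filter, id]
      rw [hmem P' hP' x]
      constructor
      · rintro ⟨P, ⟨hP, hfP⟩, hx⟩; exact ⟨P, hP, hfP, hx⟩
      · rintro ⟨P, hP, hfP, hx⟩; exact ⟨P, ⟨hP, hfP⟩, hx⟩
    have hd : (↑(C₁.filter (fun P => f P = P')) : Set (Finset S)).PairwiseDisjoint id := by
      intro P hP Q hQ hne
      simp only [Finset.mem_coe, Finset.mem_filter] at hP hQ
      exact hdisj P hP.1 Q hQ.1 hne
    calc ∑ P ∈ C₁.filter (fun P => f P = P'), distOn g P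
        = ∑ x ∈ (C₁.filter (fun P => f P = P')).biUnion id, g x :=
          (Finset.sum_biUnion hd).symm
      _ = distOn g P' := by rw [hbi]; rfl
  -- the coarsened weight function
  refine ⟨fun P' Q' => ∑ P ∈ C₁.filter (fun P => f P = P'),
      ∑ Q ∈ C₁.filter (fun Q => f Q = Q'), w P Q, ?_, ?_, ?_, ?_⟩
  · intro P' Q'
    exact Finset.sum_nonneg fun P _ => Finset.sum_nonneg fun Q _ => hw0 P Q
  · intro P' hP'
    rw [Finset.sum_comm]
    have : ∀ P ∈ C₁.filter (fun P => f P = P'),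
        ∑ Q' ∈ C₂, ∑ Q ∈ C₁.filter (fun Q => f Q = Q'), w P Q = distOn Δ P := by
      intro P hP
      rw [Finset.sum_fiberwise_of_maps_to (fun Q hQ => (hf Q hQ).1)]
      exact hrow P (Finset.mem_filter.mp hP).1
    rw [Finset.sum_congr rfl this, hsplit Δ P' hP']
  · intro Q' hQ'
    have : ∀ Q ∈ C₁.filter (fun Q => f Q = Q'),
        ∑ P' ∈ C₂, ∑ P ∈ C₁.filter (fun P => f P = P'), w P Q = distOn Δ' Q := by
      intro Q hQ
      rw [Finset.sum_fiberwise_of_maps_to (fun P hP => (hf P hP).1)]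
      exact hcol Q (Finset.mem_filter.mp hQ).1
    calc ∑ P' ∈ C₂, ∑ P ∈ C₁.filter (fun P => f P = P'),
          ∑ Q ∈ C₁.filter (fun Q => f Q = Q'), w P Q
        = ∑ Q ∈ C₁.filter (fun Q => f Q = Q'),
          ∑ P' ∈ C₂, ∑ P ∈ C₁.filter (fun P => f P = P'), w P Q := by
          rw [Finset.sum_comm]
          exact Finset.sum_congr rfl fun P' _ => Finset.sum_comm
      _ = ∑ Q ∈ C₁.filter (fun Q => f Q = Q'), distOn Δ' Q :=
          Finset.sum_congr rfl this
      _ = distOn Δ' Q' := hsplit Δ' Q' hQ'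
  · intro P' Q' hpos'
    have : ∃ P ∈ C₁.filter (fun P => f P = P'),
        ∃ Q ∈ C₁.filter (fun Q => f Q = Q'), 0 < w P Q := by
      by_contra hc
      push_neg at hc
      have : ∑ P ∈ C₁.filter (fun P => f P = P'),
          ∑ Q ∈ C₁.filter (fun Q => f Q = Q'), w P Q ≤ 0 := by
        apply Finset.sum_nonpos
        intro P hP
        apply Finset.sum_nonpos
        intro Q hQ
        exact hc P hP Q hQ
      linarith
    obtain ⟨P, hP, Q, hQ, hwPQ⟩ := this
    obtain ⟨hP₁, hfP⟩ := Finset.mem_filter.mp hP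
    obtain ⟨hQ₁, hfQ⟩ := Finset.mem_filter.mp hQ
    obtain ⟨P'', Q'', hP''₂, hQ''₂, hPP'', hQQ'', hr₂⟩ := hle.2 P Q (hpos P Q hwPQ)
    rwa [← hfP, ← hfQ, hfval P hP₁ P'' hP''₂ hPP'', hfval Q hQ₁ Q'' hQ''₂ hQQ'']

end PAGame
end

section
/- Transitivity of simulation-with-respect-to-choice: Let (Σ, ⪯) be a partition pair on the state space of a probabilistic game structure. Define s ⊑* t iff for all mixed actions π of player I, there exists a mixed action π' of player I such that step(s,π)_Σ (⪯̂)_{Sm} step(t,π')_Σ, where step(s,π) = { step(s, ⟨π, π₂⟩) | π₂ a mixed action of player II } is the set of possible next-state distributions. Then ⊑* is a transitive relation on states. -/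
namespace PAGame

theorem liftRelP_trans {S : Type*} (C : Finset (Finset S))
    (r : Finset S → Finset S → Prop)
    (hr : ∀ P Q R', r P Q → r Q R' → r P R')
    {D E F : Finset S → ℝ} (h1 : LiftRelP C r D E) (h2 : LiftRelP C r E F) :
    LiftRelP C r D F := by
  classical
  obtain ⟨w1, w1n, w1r, w1c, w1p⟩ := h1
  obtain ⟨w2, w2n, w2r, w2c, w2p⟩ := h2
  have hE : ∀ Q ∈ C, 0 ≤ E Q := fun Q hQ =>
    (w1c Q hQ) ▸ Finset.sum_nonneg (fun P _ => w1n P Q)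
  have hEzero1 : ∀ Q ∈ C, E Q = 0 → ∀ P ∈ C, w1 P Q = 0 := by
    intro Q hQ h0 P hP
    have h := w1c Q hQ
    rw [h0] at h
    exact (Finset.sum_eq_zero_iff_of_nonneg (fun P _ => w1n P Q)).mp h P hP
  have hEzero2 : ∀ Q ∈ C, E Q = 0 → ∀ R ∈ C, w2 Q R = 0 := by
    intro Q hQ h0 R hR
    have h := w2r Q hQ
    rw [h0] at h
    exact (Finset.sum_eq_zero_iff_of_nonneg (fun R _ => w2n Q R)).mp h R hR
  refine ⟨fun P R => ∑ Q ∈ C, if 0 < E Q then w1 P Q * w2 Q R / E Q else 0,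
    ?_, ?_, ?_, ?_⟩
  · intro P R
    apply Finset.sum_nonneg
    intro Q hQ
    split_ifs with h
    · exact div_nonneg (mul_nonneg (w1n P Q) (w2n Q R)) h.le
    · exact le_refl 0
  · intro P hP
    rw [Finset.sum_comm]
    calc ∑ Q ∈ C, ∑ R ∈ C, (if 0 < E Q then w1 P Q * w2 Q R / E Q else 0)
        = ∑ Q ∈ C, w1 P Q := by
          apply Finset.sum_congr rfl
          intro Q hQ
          by_cases h : 0 < E Q
          · simp only [if_pos h]
            rw [← Finset.sum_div, ← Finset.mul_sum, w2r Q hQ, mul_div_assoc,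
              div_self h.ne', mul_one]
          · simp only [if_neg h]
            rw [Finset.sum_const_zero]
            have h0 : E Q = 0 := le_antisymm (not_lt.mp h) (hE Q hQ)
            exact (hEzero1 Q hQ h0 P hP).symm
      _ = D P := w1r P hP
  · intro R hR
    rw [Finset.sum_comm]
    calc ∑ Q ∈ C, ∑ P ∈ C, (if 0 < E Q then w1 P Q * w2 Q R / E Q else 0)
        = ∑ Q ∈ C, w2 Q R := by
          apply Finset.sum_congr rfl
          intro Q hQ
          by_cases h : 0 < E Q
          · simp only [if_pos h]
            rw [← Finset.sum_div, ← Finset.sum_mul, w1c Q hQ, mul_comm,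
              mul_div_assoc, div_self h.ne', mul_one]
          · simp only [if_neg h]
            rw [Finset.sum_const_zero]
            have h0 : E Q = 0 := le_antisymm (not_lt.mp h) (hE Q hQ)
            exact (hEzero2 Q hQ h0 R hR).symm
      _ = F R := w2c R hR
  · intro P R hPR
    obtain ⟨Q, hQ, hpos⟩ :
        ∃ Q ∈ C, 0 < (if 0 < E Q then w1 P Q * w2 Q R / E Q else 0) := by
      by_contra hc
      push_neg at hc
      have hle : ∑ Q ∈ C, (if 0 < E Q then w1 P Q * w2 Q R / E Q else 0) ≤ 0 :=
        Finset.sum_nonpos hc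
      linarith
    split_ifs at hpos with h
    · have hm : 0 < w1 P Q * w2 Q R := by
        by_contra hm
        push_neg at hm
        have : w1 P Q * w2 Q R / E Q ≤ 0 := div_nonpos_of_nonpos_of_nonneg hm h.le
        linarith
      rcases mul_pos_iff.mp hm with ⟨ha, hb⟩ | ⟨ha, hb⟩
      · exact hr P Q R (w1p P Q ha) (w2p Q R hb)
      · exact absurd (w1n P Q) (not_le.mpr ha)
    · exact absurd hpos (lt_irrefl 0)

/-- simulation with respect to player I's choice on a partition
pair is a transitive relation on states. -/
theorem stmt8 {S A₁ A₂ : Type*} [Fintype S] [Fintype A₁] [Fintype A₂]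
    (δ : S → A₁ → A₂ → S → ℝ) (hδ : ∀ s a b, ProbDist (δ s a b))
    (C : Finset (Finset S)) (r : Finset S → Finset S → Prop)
    (hC : IsPartition C) (hr : IsPartialOrderOn C r)
    (s t u : S) (hst : SimChoice C r δ s t) (htu : SimChoice C r δ t u) :
    SimChoice C r δ s u := by
  intro π hπ
  obtain ⟨π', hπ', h1⟩ := hst π hπ
  obtain ⟨π'', hπ'', h2⟩ := htu π' hπ'
  refine ⟨π'', hπ'', ?_⟩
  intro Θ hΘ
  obtain ⟨Δ, hΔ, h12⟩ := h2 Θ hΘ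
  obtain ⟨Δ', hΔ', h01⟩ := h1 Δ hΔ
  exact ⟨Δ', hΔ', liftRelP_trans C r hr.2.2.2 h01 h12⟩

end PAGame
end

section
/- Every stable partition pair induces a PA-I-simulation (Lemma 1 of the paper): For any partition pair (Σ, ⪯) on a probabilistic game structure G with (Σ, ⪯) ≤ (Σ₀, Id) (where Σ₀ is the labelling partition), if (Σ, ⪯) is stable with respect to player I's choice, then the induced relation ⊑_{(Σ,⪯)} defined by s ⊑ t iff [s]_Σ ⪯ [t]_Σ is a PA-I-simulation. -/
namespace PAGame

section Aux

variable {S : Type*} [Fintype S]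

lemma probdist_of (Δ : S → ℝ) (h0 : ∀ s, 0 ≤ Δ s) (h1 : ∑ s, Δ s = 1) :
    ProbDist Δ := by
  refine ⟨fun s => ⟨h0 s, ?_⟩, h1⟩
  calc Δ s ≤ ∑ x, Δ x := Finset.single_le_sum (fun i _ => h0 i) (Finset.mem_univ s)
  _ = 1 := h1

lemma stepD_nonneg {A₁ A₂ : Type*} [Fintype A₁] [Fintype A₂]
    (δ : S → A₁ → A₂ → S → ℝ) (hδ : ∀ s a b, ProbDist (δ s a b))
    (s : S) (π₁ : A₁ → ℝ) (π₂ : A₂ → ℝ) (h₁ : ProbDist π₁) (h₂ : ProbDist π₂)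
    (t : S) : 0 ≤ stepD δ s π₁ π₂ t := by
  apply Finset.sum_nonneg; intro a₁ _
  apply Finset.sum_nonneg; intro a₂ _
  have := (h₁.1 a₁).1; have := (h₂.1 a₂).1; have := ((hδ s a₁ a₂).1 t).1
  positivity

lemma probdist_stepD {A₁ A₂ : Type*} [Fintype A₁] [Fintype A₂]
    (δ : S → A₁ → A₂ → S → ℝ) (hδ : ∀ s a b, ProbDist (δ s a b))
    (s : S) (π₁ : A₁ → ℝ) (π₂ : A₂ → ℝ) (h₁ : ProbDist π₁) (h₂ : ProbDist π₂) :
    ProbDist (stepD δ s π₁ π₂) := by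
  refine probdist_of _ (stepD_nonneg δ hδ s π₁ π₂ h₁ h₂) ?_
  unfold stepD
  rw [Finset.sum_comm]
  have : ∀ a₁ : A₁, ∑ t : S, ∑ a₂ : A₂, π₁ a₁ * π₂ a₂ * δ s a₁ a₂ t
      = π₁ a₁ := by
    intro a₁
    rw [Finset.sum_comm]
    have : ∀ a₂ : A₂, ∑ t : S, π₁ a₁ * π₂ a₂ * δ s a₁ a₂ t
        = π₁ a₁ * π₂ a₂ := by
      intro a₂
      rw [← Finset.mul_sum, (hδ s a₁ a₂).2, mul_one]
    rw [Finset.sum_congr rfl (fun a₂ _ => this a₂), ← Finset.mul_sum, h₂.2, mul_one]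
  rw [Finset.sum_congr rfl (fun a₁ _ => this a₁), h₁.2]

lemma sum_partition [DecidableEq S] (C : Finset (Finset S)) (hC : IsPartition C)
    (f : S → ℝ) : ∑ s, f s = ∑ B ∈ C, ∑ s ∈ B, f s := by
  have h1 : ∀ B ∈ C, ∑ s ∈ B, f s = ∑ s : S, if s ∈ B then f s else 0 := by
    intro B _
    rw [Finset.sum_ite_mem, Finset.univ_inter]
  rw [Finset.sum_congr rfl h1, Finset.sum_comm]
  apply Finset.sum_congr rfl
  intro s _
  obtain ⟨B₀, ⟨hB₀C, hsB₀⟩, huniq⟩ := hC.1 s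
  rw [Finset.sum_eq_single_of_mem B₀ hB₀C]
  · simp [hsB₀]
  · intro B hB hne
    have : s ∉ B := fun hs => hne (huniq B ⟨hB, hs⟩)
    simp [this]

/-- Key lemma: lifting on blocks implies lifting on states. -/
lemma lift_of_liftP (C : Finset (Finset S)) (hC : IsPartition C)
    (r : Finset S → Finset S → Prop)
    (Δ Θ : S → ℝ) (hΔ : ProbDist Δ) (hΘ : ProbDist Θ)
    (h : LiftRelP C r (distOn Δ) (distOn Θ)) :
    LiftRel (fun s t => ∃ P Q, P ∈ C ∧ Q ∈ C ∧ s ∈ P ∧ t ∈ Q ∧ r P Q) Δ Θ := by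
  classical
  obtain ⟨w, hw0, hwrow, hwcol, hwr⟩ := h
  choose blk hblk using fun s => (hC.1 s).exists
  have hblkC : ∀ s, blk s ∈ C := fun s => (hblk s).1
  have hblkmem : ∀ s, s ∈ blk s := fun s => (hblk s).2
  have blkuniq : ∀ s B, B ∈ C → s ∈ B → blk s = B := fun s B hB hs =>
    (hC.1 s).unique ⟨hblkC s, hblkmem s⟩ ⟨hB, hs⟩
  -- basic nonnegativity / bounds
  have hΔ0 : ∀ x, 0 ≤ Δ x := fun x => (hΔ.1 x).1
  have hΘ0 : ∀ x, 0 ≤ Θ x := fun x => (hΘ.1 x).1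
  have hD0 : ∀ B : Finset S, 0 ≤ distOn Δ B := fun B =>
    Finset.sum_nonneg fun x _ => hΔ0 x
  have hE0 : ∀ B : Finset S, 0 ≤ distOn Θ B := fun B =>
    Finset.sum_nonneg fun x _ => hΘ0 x
  have hΔle : ∀ s, Δ s ≤ distOn Δ (blk s) := fun s =>
    Finset.single_le_sum (fun i _ => hΔ0 i) (hblkmem s)
  have hΘle : ∀ t, Θ t ≤ distOn Θ (blk t) := fun t =>
    Finset.single_le_sum (fun i _ => hΘ0 i) (hblkmem t)
  have hE1 : ∀ B : Finset S, distOn Θ B ≤ 1 := by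
    intro B
    calc distOn Θ B ≤ ∑ x : S, Θ x :=
        Finset.sum_le_sum_of_subset_of_nonneg (Finset.subset_univ B)
          (fun i _ _ => hΘ0 i)
    _ = 1 := hΘ.2
  -- w P Q ≤ distOn Θ Q, for P ∈ C
  have hwleE : ∀ P Q, P ∈ C → Q ∈ C → w P Q ≤ distOn Θ Q := by
    intro P Q hP hQ
    calc w P Q ≤ ∑ P' ∈ C, w P' Q :=
        Finset.single_le_sum (fun P' _ => hw0 P' Q) hP
    _ = distOn Θ Q := hwcol Q hQ
  have hwE0 : ∀ P Q, P ∈ C → Q ∈ C → distOn Θ Q = 0 → w P Q = 0 := by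
    intro P Q hP hQ hE
    have := hwleE P Q hP hQ
    linarith [hw0 P Q]
  -- the weight function on states
  set v : S → S → ℝ := fun s t =>
    w (blk s) (blk t) * Δ s * Θ t / (distOn Δ (blk s) * distOn Θ (blk t)) with hv
  have hv0 : ∀ s t, 0 ≤ v s t := by
    intro s t
    apply div_nonneg _ (mul_nonneg (hD0 _) (hE0 _))
    exact mul_nonneg (mul_nonneg (hw0 _ _) (hΔ0 s)) (hΘ0 t)
  -- row sums
  have hrow : ∀ s, ∑ t, v s t = Δ s := by
    intro s
    by_cases hD : distOn Δ (blk s) = 0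
    · have hΔs : Δ s = 0 := le_antisymm (hD ▸ hΔle s) (hΔ0 s)
      rw [hΔs]
      apply Finset.sum_eq_zero
      intro t _
      simp [hv, hD]
    · have hDpos : 0 < distOn Δ (blk s) := lt_of_le_of_ne (hD0 _) (Ne.symm hD)
      rw [sum_partition C hC]
      have hinner : ∀ Q ∈ C, ∑ t ∈ Q, v s t = w (blk s) Q * Δ s / distOn Δ (blk s) := by
        intro Q hQ
        have hblkt : ∀ t ∈ Q, blk t = Q := fun t ht => blkuniq t Q hQ ht
        have : ∑ t ∈ Q, v s t
            = ∑ t ∈ Q, w (blk s) Q * Δ s * Θ t / (distOn Δ (blk s) * distOn Θ Q) := by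
          apply Finset.sum_congr rfl
          intro t ht
          simp [hv, hblkt t ht]
        rw [this]
        by_cases hE : distOn Θ Q = 0
        · have hwz : w (blk s) Q = 0 := hwE0 _ Q (hblkC s) hQ hE
          simp [hwz]
        · have hEpos : 0 < distOn Θ Q := lt_of_le_of_ne (hE0 _) (Ne.symm hE)
          have : ∑ t ∈ Q, w (blk s) Q * Δ s * Θ t / (distOn Δ (blk s) * distOn Θ Q)
              = (∑ t ∈ Q, Θ t) * (w (blk s) Q * Δ s / (distOn Δ (blk s) * distOn Θ Q)) := by
            rw [Finset.sum_mul]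
            apply Finset.sum_congr rfl
            intro t _
            ring
          rw [this]
          have hEeq : ∑ t ∈ Q, Θ t = distOn Θ Q := rfl
          rw [hEeq]
          field_simp
      rw [Finset.sum_congr rfl hinner, ← Finset.sum_div, ← Finset.sum_mul,
        hwrow (blk s) (hblkC s)]
      field_simp
  -- column sums
  have hcol : ∀ t, ∑ s, v s t = Θ t := by
    intro t
    by_cases hE : distOn Θ (blk t) = 0
    · have hΘt : Θ t = 0 := le_antisymm (hE ▸ hΘle t) (hΘ0 t)
      rw [hΘt]
      apply Finset.sum_eq_zero
      intro s _
      simp [hv, hE]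
    · have hEpos : 0 < distOn Θ (blk t) := lt_of_le_of_ne (hE0 _) (Ne.symm hE)
      rw [sum_partition C hC]
      have hinner : ∀ P ∈ C, ∑ s ∈ P, v s t = w P (blk t) * Θ t / distOn Θ (blk t) := by
        intro P hP
        have hblks : ∀ s ∈ P, blk s = P := fun s hs => blkuniq s P hP hs
        have : ∑ s ∈ P, v s t
            = ∑ s ∈ P, w P (blk t) * Δ s * Θ t / (distOn Δ P * distOn Θ (blk t)) := by
          apply Finset.sum_congr rfl
          intro s hs
          simp [hv, hblks s hs]
        rw [this]
        by_cases hD : distOn Δ P = 0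
        · have hwz : w P (blk t) = 0 := by
            have hle : w P (blk t) ≤ ∑ Q' ∈ C, w P Q' :=
              Finset.single_le_sum (fun Q' _ => hw0 P Q') (hblkC t)
            have := hwrow P hP
            have h0le := hw0 P (blk t)
            rw [this, hD] at hle
            linarith
          simp [hwz]
        · have hDpos : 0 < distOn Δ P := lt_of_le_of_ne (hD0 _) (Ne.symm hD)
          have : ∑ s ∈ P, w P (blk t) * Δ s * Θ t / (distOn Δ P * distOn Θ (blk t))
              = (∑ s ∈ P, Δ s) * (w P (blk t) * Θ t / (distOn Δ P * distOn Θ (blk t))) := by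
            rw [Finset.sum_mul]
            apply Finset.sum_congr rfl
            intro s _
            ring
          rw [this]
          have hDeq : ∑ s ∈ P, Δ s = distOn Δ P := rfl
          rw [hDeq]
          field_simp
      rw [Finset.sum_congr rfl hinner, ← Finset.sum_div, ← Finset.sum_mul,
        hwcol (blk t) (hblkC t)]
      field_simp
  -- bounds ≤ 1
  have hv1 : ∀ s t, v s t ≤ 1 := by
    intro s t
    by_cases hD : distOn Δ (blk s) = 0
    · simp [hv, hD]
    by_cases hE : distOn Θ (blk t) = 0
    · simp [hv, hE]
    have hDpos : 0 < distOn Δ (blk s) := lt_of_le_of_ne (hD0 _) (Ne.symm hD)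
    have hEpos : 0 < distOn Θ (blk t) := lt_of_le_of_ne (hE0 _) (Ne.symm hE)
    rw [hv]
    rw [div_le_one (by positivity)]
    have hw1 : w (blk s) (blk t) ≤ 1 :=
      le_trans (hwleE _ _ (hblkC s) (hblkC t)) (hE1 _)
    calc w (blk s) (blk t) * Δ s * Θ t
        ≤ 1 * distOn Δ (blk s) * distOn Θ (blk t) := by
          apply mul_le_mul (mul_le_mul hw1 (hΔle s) (hΔ0 s) zero_le_one)
            (hΘle t) (hΘ0 t) (by positivity)
    _ = distOn Δ (blk s) * distOn Θ (blk t) := by ring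
  refine ⟨v, fun s t => ⟨hv0 s t, hv1 s t⟩, hrow, hcol, ?_⟩
  intro s t hvpos
  refine ⟨blk s, blk t, hblkC s, hblkC t, hblkmem s, hblkmem t, ?_⟩
  apply hwr
  by_contra hle
  push_neg at hle
  have : w (blk s) (blk t) = 0 := le_antisymm hle (hw0 _ _)
  rw [hv] at hvpos
  simp [this] at hvpos

end Aux

/-- Lemma 1: a stable partition pair below the labelling
partition induces a PA-I-simulation. -/
theorem stmt9 {S AP A₁ A₂ : Type*} [Fintype S] [Fintype A₁] [Fintype A₂]
    (L : S → AP) (δ : S → A₁ → A₂ → S → ℝ) (hδ : ∀ s a b, ProbDist (δ s a b))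
    (C : Finset (Finset S)) (r : Finset S → Finset S → Prop)
    (hC : IsPartition C) (hr : IsPartialOrderOn C r)
    (hlab : BelowLabel L C r)
    (hstable : StableChoice C r δ) :
    IsPASim L δ (fun s t => ∃ P Q, P ∈ C ∧ Q ∈ C ∧ s ∈ P ∧ t ∈ Q ∧ r P Q) := by
  rintro s t ⟨P, Q, hP, hQ, hsP, htQ, hrPQ⟩
  refine ⟨hlab.2 P Q hrPQ s hsP t htQ, ?_⟩
  intro π₁ hπ₁
  obtain ⟨π₁', hπ₁', hsim⟩ := hstable π₁ hπ₁ P Q hrPQ s hsP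
  refine ⟨π₁', hπ₁', ?_⟩
  intro π₂' hπ₂'
  have hΘmem : distOn (stepD δ t π₁' π₂') ∈ stepSet δ t π₁' := ⟨π₂', hπ₂', rfl⟩
  obtain ⟨D, hDmem, hlift⟩ := hsim t htQ _ hΘmem
  obtain ⟨π₂, hπ₂, rfl⟩ := hDmem
  exact ⟨π₂, hπ₂, lift_of_liftP C hC r _ _
    (probdist_stepD δ hδ s π₁ π₂ hπ₁ hπ₂)
    (probdist_stepD δ hδ t π₁' π₂' hπ₁' hπ₂') hlift⟩

end PAGame
end

section
/- Monotonicity of ρ (Lemma of the paper): The operator ρ mapping a partition pair (Σ, ⪯) to the largest partition pair ≤ (Σ, ⪯) that is stable on (Σ, ⪯) is monotone on the set of partition pairs below the labelling partition: (Σ₁, ⪯₁) ≤ (Σ₂, ⪯₂) implies ρ(Σ₁, ⪯₁) ≤ ρ(Σ₂, ⪯₂). -/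
namespace PAGame

section AuxStmt11

variable {S : Type*}

lemma block_unique' {C : Finset (Finset S)} (hp : IsPartition C)
    {A B : Finset S} (hA : A ∈ C) (hB : B ∈ C) {s : S} (hsA : s ∈ A) (hsB : s ∈ B) :
    A = B :=
  (hp.1 s).unique ⟨hA, hsA⟩ ⟨hB, hsB⟩

lemma blocks_disjoint' {C : Finset (Finset S)} (hp : IsPartition C)
    {A B : Finset S} (hA : A ∈ C) (hB : B ∈ C) (hne : A ≠ B) : Disjoint A B := by
  rw [Finset.disjoint_left]
  intro x hxA hxB
  exact hne (block_unique' hp hA hB hxA hxB)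

lemma PPLe_trans' {C₁ C₂ C₃ : Finset (Finset S)}
    {r₁ r₂ r₃ : Finset S → Finset S → Prop}
    (h12 : PPLe C₁ r₁ C₂ r₂) (h23 : PPLe C₂ r₂ C₃ r₃) : PPLe C₁ r₁ C₃ r₃ := by
  constructor
  · intro P hP
    obtain ⟨Q, hQ, hPQ⟩ := h12.1 P hP
    obtain ⟨Q', hQ', hQQ'⟩ := h23.1 Q hQ
    exact ⟨Q', hQ', hPQ.trans hQQ'⟩
  · intro P Q hr
    obtain ⟨P', Q', hP', hQ', hPP', hQQ', hr'⟩ := h12.2 P Q hr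
    obtain ⟨P'', Q'', hP'', hQ'', hPP'', hQQ'', hr''⟩ := h23.2 P' Q' hr'
    exact ⟨P'', Q'', hP'', hQ'', hPP'.trans hPP'', hQQ'.trans hQQ'', hr''⟩

lemma liftP_mono [Fintype S] {C₁ C₂ : Finset (Finset S)}
    {r₁ r₂ : Finset S → Finset S → Prop}
    (hp₁ : IsPartition C₁) (hp₂ : IsPartition C₂) (hle : PPLe C₁ r₁ C₂ r₂)
    {Δ Θ : S → ℝ} (h : LiftRelP C₁ r₁ (distOn Δ) (distOn Θ)) :
    LiftRelP C₂ r₂ (distOn Δ) (distOn Θ) := by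
  classical
  obtain ⟨w, hw0, hwD, hwE, hwr⟩ := h
  set f : Finset S → Finset S := fun P =>
    if h : ∃ Q ∈ C₂, P ⊆ Q then h.choose else ∅ with hf_def
  have hf : ∀ P ∈ C₁, f P ∈ C₂ ∧ P ⊆ f P := by
    intro P hP
    have h : ∃ Q ∈ C₂, P ⊆ Q := hle.1 P hP
    simp only [hf_def, dif_pos h]
    exact ⟨h.choose_spec.1, h.choose_spec.2⟩
  have hfmem : ∀ P ∈ C₁, f P ∈ C₂ := fun P hP => (hf P hP).1
  have hfib : ∀ (g : S → ℝ) (A : Finset S), A ∈ C₂ →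
      distOn g A = ∑ P ∈ C₁.filter (fun P => f P = A), distOn g P := by
    intro g A hA
    have hbi : (C₁.filter (fun P => f P = A)).biUnion id = A := by
      ext x
      simp only [Finset.mem_biUnion, Finset.mem_filter, id]
      constructor
      · rintro ⟨P, ⟨hP, hfP⟩, hxP⟩
        exact hfP ▸ (hf P hP).2 hxP
      · intro hxA
        obtain ⟨P, ⟨hP, hxP⟩, _⟩ := hp₁.1 x
        refine ⟨P, ⟨hP, ?_⟩, hxP⟩
        exact block_unique' hp₂ (hf P hP).1 hA ((hf P hP).2 hxP) hxA
    have hdisj : (↑(C₁.filter (fun P => f P = A)) : Set (Finset S)).PairwiseDisjoint id := by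
      intro P hP Q hQ hne
      exact blocks_disjoint' hp₁ (Finset.mem_filter.mp hP).1 (Finset.mem_filter.mp hQ).1 hne
    calc distOn g A = ∑ x ∈ (C₁.filter (fun P => f P = A)).biUnion id, g x := by
          rw [hbi]; rfl
      _ = ∑ P ∈ C₁.filter (fun P => f P = A), ∑ x ∈ P, g x := Finset.sum_biUnion hdisj
      _ = _ := rfl
  refine ⟨fun A B => ∑ P ∈ C₁.filter (fun P => f P = A),
      ∑ Q ∈ C₁.filter (fun Q => f Q = B), w P Q, ?_, ?_, ?_, ?_⟩
  · intro A B
    exact Finset.sum_nonneg fun P _ => Finset.sum_nonneg fun Q _ => hw0 P Q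
  · intro A hA
    rw [Finset.sum_comm]
    calc ∑ P ∈ C₁.filter (fun P => f P = A), ∑ B ∈ C₂, ∑ Q ∈ C₁.filter (fun Q => f Q = B), w P Q
        = ∑ P ∈ C₁.filter (fun P => f P = A), ∑ Q ∈ C₁, w P Q := by
          refine Finset.sum_congr rfl fun P _ => ?_
          exact Finset.sum_fiberwise_of_maps_to hfmem _
      _ = ∑ P ∈ C₁.filter (fun P => f P = A), distOn Δ P := by
          refine Finset.sum_congr rfl fun P hP => hwD P (Finset.mem_filter.mp hP).1
      _ = distOn Δ A := (hfib Δ A hA).symm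
  · intro B hB
    calc ∑ A ∈ C₂, ∑ P ∈ C₁.filter (fun P => f P = A), ∑ Q ∈ C₁.filter (fun Q => f Q = B), w P Q
        = ∑ P ∈ C₁, ∑ Q ∈ C₁.filter (fun Q => f Q = B), w P Q :=
          Finset.sum_fiberwise_of_maps_to hfmem _
      _ = ∑ Q ∈ C₁.filter (fun Q => f Q = B), ∑ P ∈ C₁, w P Q := Finset.sum_comm
      _ = ∑ Q ∈ C₁.filter (fun Q => f Q = B), distOn Θ Q := by
          refine Finset.sum_congr rfl fun Q hQ => hwE Q (Finset.mem_filter.mp hQ).1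
      _ = distOn Θ B := (hfib Θ B hB).symm
  · intro A B hpos
    have h1 : ∃ P ∈ C₁.filter (fun P => f P = A),
        0 < ∑ Q ∈ C₁.filter (fun Q => f Q = B), w P Q := by
      by_contra hcon
      push_neg at hcon
      have := Finset.sum_nonpos hcon
      linarith
    obtain ⟨P, hPf, hPpos⟩ := h1
    have h2 : ∃ Q ∈ C₁.filter (fun Q => f Q = B), 0 < w P Q := by
      by_contra hcon
      push_neg at hcon
      have := Finset.sum_nonpos hcon
      linarith
    obtain ⟨Q, hQf, hQpos⟩ := h2
    obtain ⟨hP₁, hfPA⟩ := Finset.mem_filter.mp hPf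
    obtain ⟨hQ₁, hfQB⟩ := Finset.mem_filter.mp hQf
    have hr : r₁ P Q := hwr P Q hQpos
    obtain ⟨P', Q', hP', hQ', hPP', hQQ', hr₂⟩ := hle.2 P Q hr
    obtain ⟨s, hs⟩ := hp₁.2 P hP₁
    obtain ⟨t, ht⟩ := hp₁.2 Q hQ₁
    have hPA : P' = A := by
      have := block_unique' hp₂ hP' (hfPA ▸ (hf P hP₁).1) (hPP' hs) (hfPA ▸ (hf P hP₁).2 hs)
      exact this.trans (by rw [← hfPA])
    have hQB : Q' = B := by
      have := block_unique' hp₂ hQ' (hfQB ▸ (hf Q hQ₁).1) (hQQ' ht) (hfQB ▸ (hf Q hQ₁).2 ht)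
      exact this.trans (by rw [← hfQB])
    rw [← hPA, ← hQB]
    exact hr₂

lemma simChoice_mono {A₁ A₂ : Type*} [Fintype S] [Fintype A₁] [Fintype A₂]
    {C₁ C₂ : Finset (Finset S)} {r₁ r₂ : Finset S → Finset S → Prop}
    {δ : S → A₁ → A₂ → S → ℝ}
    (hp₁ : IsPartition C₁) (hp₂ : IsPartition C₂) (hle : PPLe C₁ r₁ C₂ r₂)
    {s t : S} (h : SimChoice C₁ r₁ δ s t) : SimChoice C₂ r₂ δ s t := by
  intro π hπ
  obtain ⟨π', hπ', hsm⟩ := h π hπ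
  refine ⟨π', hπ', fun Θ hΘ => ?_⟩
  obtain ⟨Δ, hΔ, hlift⟩ := hsm Θ hΘ
  obtain ⟨π₂, hπ₂, rfl⟩ := hΔ
  obtain ⟨π₂', hπ₂', rfl⟩ := hΘ
  exact ⟨_, ⟨π₂, hπ₂, rfl⟩, liftP_mono hp₁ hp₂ hle hlift⟩

end AuxStmt11

/-- monotonicity of the refinement operator ρ on partition pairs
below the labelling partition. -/
theorem stmt11 {S AP A₁ A₂ : Type*} [Fintype S] [Fintype A₁] [Fintype A₂]
    (L : S → AP) (δ : S → A₁ → A₂ → S → ℝ) (hδ : ∀ s a b, ProbDist (δ s a b))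
    (C₁ C₂ C₁' C₂' : Finset (Finset S))
    (r₁ r₂ r₁' r₂' : Finset S → Finset S → Prop)
    (hp₁ : IsPartition C₁) (hp₂ : IsPartition C₂)
    (ho₁ : IsPartialOrderOn C₁ r₁) (ho₂ : IsPartialOrderOn C₂ r₂)
    (hb₁ : BelowLabel L C₁ r₁) (hb₂ : BelowLabel L C₂ r₂)
    (hle : PPLe C₁ r₁ C₂ r₂)
    (hρ₁ : IsRho δ C₁ r₁ C₁' r₁') (hρ₂ : IsRho δ C₂ r₂ C₂' r₂') :
    PPLe C₁' r₁' C₂' r₂' := by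
  obtain ⟨⟨hp₁', ho₁', hle₁', hst₁'⟩, _⟩ := hρ₁
  refine hρ₂.2 C₁' r₁' hp₁' ho₁' (PPLe_trans' hle₁' hle) ?_
  intro P Q hr s hs t ht
  exact simChoice_mono hp₁ hp₂ hle (hst₁' P Q hr s hs t ht)

end PAGame
end
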